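/- arXiv:2511.05870 — 3 statements merged into one kernel-verified Lean document; each statement's English description precedes it below -/
import Mathlib

section
/- Let μ_t^k ∈ ℝ for t ∈ {1,…,T₀,T} and k ∈ {1,…,K}, and let ν₁,…,ν_{T₀} ∈ ℝ with ∑_{t=1}^{T₀} ν_t = 1 satisfy: for all k ∈ {2,…,K}, μ_T^1 − μ_T^k = ∑_{t=1}^{T₀} ν_t (μ_t^1 − μ_t^k). Then for any ω₂,…,ω_K ∈ ℝ with ∑_{k=2}^K ω_k = 1, μ_T^1 = ∑_{t=1}^{T₀} ν_t μ_t^1 + ∑_{k=2}^K ω_k μ_T^k − ∑_{t=1}^{T₀} ∑_{k=2}^K ν_t ω_k μ_t^k. -/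
/-! Averaging the bias identities with the affine weights ω turns the left-hand sides into
μ_T^1 − ∑ ω_k μ_T^k; on the right, swapping the two sums and using ∑ ω_k = 1 once more leaves
∑ ν_t μ_t^1 − ∑∑ ν_t ω_k μ_t^k. -/

namespace Finset

variable {R ι κ : Type*} [CommRing R] {s : Finset ι} {w : ι → R}

theorem sum_mul_sub_eq_sub_sum_mul (hw : ∑ i ∈ s, w i = 1) (a : R) (b : ι → R) :
    ∑ i ∈ s, w i * (a - b i) = a - ∑ i ∈ s, w i * b i := by
  simp only [mul_sub, sum_sub_distrib, ← sum_mul, hw, one_mul]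

theorem sum_mul_sum_mul_sub_eq_of_sum_eq_one (hw : ∑ i ∈ s, w i = 1) (u : Finset κ)
    (v x : κ → R) (y : κ → ι → R) :
    ∑ i ∈ s, w i * ∑ t ∈ u, v t * (x t - y t i)
      = ∑ t ∈ u, v t * x t - ∑ t ∈ u, ∑ i ∈ s, v t * w i * y t i := by
  calc ∑ i ∈ s, w i * ∑ t ∈ u, v t * (x t - y t i)
      = ∑ t ∈ u, v t * ∑ i ∈ s, w i * (x t - y t i) := by
        simp only [mul_sum]
        rw [sum_comm]
        exact sum_congr rfl fun _ _ => sum_congr rfl fun _ _ => mul_left_comm _ _ _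
    _ = ∑ t ∈ u, v t * (x t - ∑ i ∈ s, w i * y t i) := by
        simp only [sum_mul_sub_eq_sub_sum_mul hw]
    _ = ∑ t ∈ u, v t * x t - ∑ t ∈ u, ∑ i ∈ s, v t * w i * y t i := by
        simp only [mul_sub, sum_sub_distrib, mul_sum, mul_assoc]

end Finset

theorem stmt11_general (T₀ T K : ℕ) (μ : ℕ → ℕ → ℝ)
    (ν : ℕ → ℝ)
    (hval : ∀ k ∈ Finset.Icc 2 K,
      μ T 1 - μ T k = ∑ t ∈ Finset.Icc 1 T₀, ν t * (μ t 1 - μ t k))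
    (ω : ℕ → ℝ) (hω : ∑ k ∈ Finset.Icc 2 K, ω k = 1) :
    μ T 1 = (∑ t ∈ Finset.Icc 1 T₀, ν t * μ t 1)
      + (∑ k ∈ Finset.Icc 2 K, ω k * μ T k)
      - ∑ t ∈ Finset.Icc 1 T₀, ∑ k ∈ Finset.Icc 2 K, ν t * ω k * μ t k := by
  have hbias : ∑ k ∈ Finset.Icc 2 K, ω k * (μ T 1 - μ T k)
      = ∑ k ∈ Finset.Icc 2 K, ω k * ∑ t ∈ Finset.Icc 1 T₀, ν t * (μ t 1 - μ t k) :=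
    Finset.sum_congr rfl fun k hk => by rw [hval k hk]
  rw [Finset.sum_mul_sub_eq_sub_sum_mul hω,
    Finset.sum_mul_sum_mul_sub_eq_of_sum_eq_one hω] at hbias
  linarith

/-- Double robustness, time-weight direction: if the time weights ν express each
post-treatment selection bias as the ν-weighted combination of pre-treatment biases,
then the two-way weighted DID formula recovers μ_T^1 for arbitrary affine unit weights ω. -/
theorem stmt11 (T₀ T K : ℕ) (μ : ℕ → ℕ → ℝ)
    (ν : ℕ → ℝ) (hν : ∑ t ∈ Finset.Icc 1 T₀, ν t = 1)
    (hval : ∀ k ∈ Finset.Icc 2 K,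
      μ T 1 - μ T k = ∑ t ∈ Finset.Icc 1 T₀, ν t * (μ t 1 - μ t k))
    (ω : ℕ → ℝ) (hω : ∑ k ∈ Finset.Icc 2 K, ω k = 1) :
    μ T 1 = (∑ t ∈ Finset.Icc 1 T₀, ν t * μ t 1)
      + (∑ k ∈ Finset.Icc 2 K, ω k * μ T k)
      - ∑ t ∈ Finset.Icc 1 T₀, ∑ k ∈ Finset.Icc 2 K, ν t * ω k * μ t k :=
  stmt11_general T₀ T K μ ν hval ω hω
end

section
/- Let Δ ⊂ ℝ^n be the standard simplex, let f : Δ → ℝ be continuous with minimizer set M = argmin_{ω∈Δ} f(ω), and let g : Δ → ℝ be continuous. Then lim_{s→0⁺} (min_{ω∈Δ}(f(ω)+s·g(ω)) − min_{ω∈Δ} f(ω))/s = min_{ω∈M} g(ω). -/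
/-!
Let `M` be the set of minimizers of `f` on the compact set `K`, `m = min_K f` and `c = min_M g`.
Evaluating `f + s g` at a point of `M` where `g` attains `c` gives `min_K (f + s g) ≤ m + s c`.
Conversely, for `c' < c` the compact set `A = {g ≤ c'}` misses `M`, so `f ≥ m + η` on `A` for
some `η > 0`; for small `s > 0` this gap beats the bounded term `s g`, and off `A` one has
`f + s g > m + s c'` trivially. Hence the difference quotient is squeezed between `c'` and `c`.
-/

open Filter Set Topology

variable {X : Type*} {K : Set X} {f g : X → ℝ}

lemma setOf_forall_le_eq_inter_preimage_Iic {x₀ : X} (hx₀K : x₀ ∈ K)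
    (hx₀ : ∀ y ∈ K, f x₀ ≤ f y) :
    {ω | ω ∈ K ∧ ∀ ω' ∈ K, f ω ≤ f ω'} = K ∩ f ⁻¹' Iic (f x₀) := by
  ext ω
  exact ⟨fun ⟨hω, hmin⟩ => ⟨hω, hmin x₀ hx₀K⟩,
    fun ⟨hω, hle⟩ => ⟨hω, fun y hy => (mem_Iic.1 hle).trans (hx₀ y hy)⟩⟩

variable [TopologicalSpace X]

lemma eventually_forall_lt_add_mul (hK : IsCompact K) (hf : ContinuousOn f K)
    (hg : ContinuousOn g K) {x₀ : X} (hx₀ : ∀ y ∈ K, f x₀ ≤ f y) {c : ℝ}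
    (hc : ∀ y ∈ K, (∀ y' ∈ K, f y ≤ f y') → c < g y) :
    ∀ᶠ s in 𝓝[>] 0, ∀ ω ∈ K, f x₀ + s * c < f ω + s * g ω := by
  rcases (K ∩ g ⁻¹' Iic c).eq_empty_or_nonempty with hA | hA
  · filter_upwards [self_mem_nhdsWithin] with s (hs : 0 < s) ω hω
    have hgω : c < g ω := not_le.1 fun h => (eq_empty_iff_forall_notMem.1 hA) ω ⟨hω, h⟩
    nlinarith [hx₀ ω hω]
  obtain ⟨a, ⟨haK, hga⟩, -, hfa⟩ :=
    (hg.lowerSemicontinuousOn.isCompact_inter_preimage_Iic hK c).exists_sInf_image_eq_and_le hA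
      (hf.mono inter_subset_left)
  obtain ⟨b, -, -, hgb⟩ := hK.exists_sInf_image_eq_and_le ⟨a, haK⟩ hg
  have hgap : f x₀ < f a := lt_of_le_of_ne (hx₀ a haK) fun h =>
    (hc a haK fun y hy => h ▸ hx₀ y hy).not_ge hga
  have hsmall : ∀ᶠ s in 𝓝[>] 0, s * (c - g b) < f a - f x₀ :=
    nhdsWithin_le_nhds (((continuous_mul_const (c - g b)).tendsto' 0 0
      (zero_mul _)).eventually (gt_mem_nhds (sub_pos.2 hgap)))
  filter_upwards [self_mem_nhdsWithin, hsmall] with s (hs : 0 < s) hs' ω hω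
  by_cases hgω : g ω ≤ c
  · nlinarith [hfa ω ⟨hω, hgω⟩, hgb ω hω]
  · nlinarith [hx₀ ω hω]

theorem tendsto_sInf_image_add_mul_sub_div (hK : IsCompact K) (hf : ContinuousOn f K)
    (hg : ContinuousOn g K) :
    Tendsto (fun s : ℝ => (sInf ((fun ω => f ω + s * g ω) '' K) - sInf (f '' K)) / s)
      (𝓝[>] 0) (𝓝 (sInf (g '' {ω | ω ∈ K ∧ ∀ ω' ∈ K, f ω ≤ f ω'}))) := by
  rcases K.eq_empty_or_nonempty with rfl | hne
  · simp
  obtain ⟨x₀, hx₀K, hfx₀, hx₀⟩ := hK.exists_sInf_image_eq_and_le hne hf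
  have hMK : {ω | ω ∈ K ∧ ∀ ω' ∈ K, f ω ≤ f ω'} ⊆ K := fun _ h => h.1
  obtain ⟨y₀, ⟨hy₀K, hfy₀⟩, hgy₀, hy₀⟩ :=
    (setOf_forall_le_eq_inter_preimage_Iic hx₀K hx₀ ▸
      hf.lowerSemicontinuousOn.isCompact_inter_preimage_Iic hK (f x₀)).exists_sInf_image_eq_and_le
      ⟨x₀, hx₀K, hx₀⟩ (hg.mono hMK)
  have hmin (s : ℝ) := hK.exists_sInf_image_eq_and_le hne (f := fun ω => f ω + s * g ω)
    (hf.add (continuousOn_const.mul hg))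
  rw [hfx₀, hgy₀]
  refine tendsto_order.2 ⟨fun c hc => ?_, fun c hc => ?_⟩
  · filter_upwards [self_mem_nhdsWithin,
      eventually_forall_lt_add_mul hK hf hg hx₀ fun y hy hy' => hc.trans_le (hy₀ y ⟨hy, hy'⟩)]
      with s (hs : 0 < s) hlt
    obtain ⟨ω, hωK, hω, -⟩ := hmin s
    rw [hω, lt_div_iff₀ hs]
    linarith [hlt ω hωK]
  · filter_upwards [self_mem_nhdsWithin] with s (hs : 0 < s)
    obtain ⟨ω, -, hω, hωle⟩ := hmin s
    rw [hω, div_lt_iff₀ hs]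
    nlinarith [hωle y₀ hy₀K, le_antisymm (hfy₀ x₀ hx₀K) (hx₀ y₀ hy₀K)]

/-- Directional derivative of the minimum-value functional over the simplex:
(min (f + s·g) − min f)/s → min of g over the minimizer set of f, as s → 0⁺. -/
theorem stmt14 {n : ℕ} (f g : (Fin n → ℝ) → ℝ)
    (hf : ContinuousOn f (stdSimplex ℝ (Fin n)))
    (hg : ContinuousOn g (stdSimplex ℝ (Fin n))) :
    Tendsto
      (fun s : ℝ =>
        (sInf ((fun ω => f ω + s * g ω) '' stdSimplex ℝ (Fin n)) -
          sInf (f '' stdSimplex ℝ (Fin n))) / s)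
      (nhdsWithin 0 (Set.Ioi 0))
      (nhds (sInf (g ''
        {ω | ω ∈ stdSimplex ℝ (Fin n) ∧ ∀ ω' ∈ stdSimplex ℝ (Fin n), f ω ≤ f ω'}))) :=
  tendsto_sInf_image_add_mul_sub_div (isCompact_stdSimplex _ _) hf hg
end

section
/- Let A ∈ ℝ^{m×n}, b ∈ ℝ^m, a ∈ ℝ^n, and suppose S⁺ = {ω ∈ ℝ^n : ω ≥ 0, 1ᵀω = 1, Aω = b} is nonempty. Let (ω_j) be a sequence in the simplex Δ = {ω ≥ 0, 1ᵀω = 1} with ‖Aω_j − b‖ → 0, and suppose aᵀω_j → c for some c ∈ ℝ. If additionally there is σ > 0 such that for every ω₀ ∈ Δ there exists ω ∈ S⁺ with ‖ω₀ − ω‖ ≤ ‖Aω₀ − b‖/σ, then c lies in the closed interval [min_{ω∈S⁺} aᵀω, max_{ω∈S⁺} aᵀω]. -/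
open Matrix Filter

/-- If a sequence in the simplex is asymptotically feasible and its objective values
converge to c, and approximately feasible simplex points are close to exactly feasible
ones (error bound), then c lies between the min and max of the identified set. -/
theorem stmt16 {m n : ℕ} (A : Matrix (Fin m) (Fin n) ℝ) (b : Fin m → ℝ) (a : Fin n → ℝ)
    (hS : {ω : Fin n → ℝ | (∀ i, 0 ≤ ω i) ∧ (∑ i, ω i) = 1 ∧ A.mulVec ω = b}.Nonempty)
    (ωseq : ℕ → Fin n → ℝ) (hmem : ∀ j, ωseq j ∈ stdSimplex ℝ (Fin n))
    (hres : Tendsto (fun j => Real.sqrt ((A.mulVec (ωseq j) - b) ⬝ᵥ (A.mulVec (ωseq j) - b)))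
      atTop (nhds 0))
    (c : ℝ) (hconv : Tendsto (fun j => a ⬝ᵥ ωseq j) atTop (nhds c))
    (σ : ℝ) (hσ : 0 < σ)
    (herr : ∀ ω₀ ∈ stdSimplex ℝ (Fin n),
      ∃ ω ∈ {ω : Fin n → ℝ | (∀ i, 0 ≤ ω i) ∧ (∑ i, ω i) = 1 ∧ A.mulVec ω = b},
        Real.sqrt ((ω₀ - ω) ⬝ᵥ (ω₀ - ω)) ≤
          Real.sqrt ((A.mulVec ω₀ - b) ⬝ᵥ (A.mulVec ω₀ - b)) / σ) :
    sInf ((fun ω => a ⬝ᵥ ω) ''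
        {ω : Fin n → ℝ | (∀ i, 0 ≤ ω i) ∧ (∑ i, ω i) = 1 ∧ A.mulVec ω = b}) ≤ c ∧
    c ≤ sSup ((fun ω => a ⬝ᵥ ω) ''
        {ω : Fin n → ℝ | (∀ i, 0 ≤ ω i) ∧ (∑ i, ω i) = 1 ∧ A.mulVec ω = b}) := by
  set S : Set (Fin n → ℝ) :=
    {ω : Fin n → ℝ | (∀ i, 0 ≤ ω i) ∧ (∑ i, ω i) = 1 ∧ A.mulVec ω = b} with hSdef
  -- S is a closed subset of the compact simplex
  have hsub : S ⊆ stdSimplex ℝ (Fin n) := fun ω hω => ⟨hω.1, hω.2.1⟩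
  have hclosed : IsClosed S := by
    have h1 : IsClosed (stdSimplex ℝ (Fin n)) := (isCompact_stdSimplex ℝ (Fin n)).isClosed
    have h2 : IsClosed {ω : Fin n → ℝ | A.mulVec ω = b} := by
      have hc : Continuous fun ω : Fin n → ℝ => A.mulVec ω :=
        A.mulVecLin.continuous_of_finiteDimensional
      exact isClosed_eq hc continuous_const
    have : S = stdSimplex ℝ (Fin n) ∩ {ω : Fin n → ℝ | A.mulVec ω = b} := by
      ext ω
      simp only [hSdef, Set.mem_setOf_eq, Set.mem_inter_iff, stdSimplex, and_assoc]
    rw [this]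
    exact h1.inter h2
  have hcompS : IsCompact S :=
    (isCompact_stdSimplex ℝ (Fin n)).of_isClosed_subset hclosed hsub
  have hcont : Continuous fun ω : Fin n → ℝ => a ⬝ᵥ ω := by
    unfold dotProduct
    exact continuous_finset_sum _ fun i _ => (continuous_const.mul (continuous_apply i))
  have hcompK : IsCompact ((fun ω => a ⬝ᵥ ω) '' S) := hcompS.image hcont
  -- choose nearby feasible points
  choose ω' hω'S hω'dist using fun j => herr (ωseq j) (hmem j)
  -- the perturbation in objective value tends to 0
  have hCS : ∀ j, |a ⬝ᵥ (ωseq j - ω' j)| ≤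
      Real.sqrt (a ⬝ᵥ a) * Real.sqrt ((ωseq j - ω' j) ⬝ᵥ (ωseq j - ω' j)) := by
    intro j
    set d := ωseq j - ω' j
    have h := Finset.sum_mul_sq_le_sq_mul_sq Finset.univ a d
    calc |a ⬝ᵥ d| = Real.sqrt ((∑ i, a i * d i) ^ 2) := by
          rw [Real.sqrt_sq_eq_abs]; rfl
      _ ≤ Real.sqrt ((∑ i, a i ^ 2) * ∑ i, d i ^ 2) := Real.sqrt_le_sqrt h
      _ = Real.sqrt (a ⬝ᵥ a) * Real.sqrt (d ⬝ᵥ d) := by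
          rw [Real.sqrt_mul (Finset.sum_nonneg fun i _ => sq_nonneg _)]
          simp [dotProduct, sq]
  have hpert : Tendsto (fun j => a ⬝ᵥ (ωseq j - ω' j)) atTop (nhds 0) := by
    apply squeeze_zero_norm
      (fun j => le_trans (hCS j) (by
        have := hω'dist j
        have hnn : 0 ≤ Real.sqrt (a ⬝ᵥ a) := Real.sqrt_nonneg _
        exact mul_le_mul_of_nonneg_left this hnn))
    have : Tendsto (fun j => Real.sqrt (a ⬝ᵥ a) *
        (Real.sqrt ((A.mulVec (ωseq j) - b) ⬝ᵥ (A.mulVec (ωseq j) - b)) / σ))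
        atTop (nhds (Real.sqrt (a ⬝ᵥ a) * (0 / σ))) :=
      (hres.div_const σ).const_mul _
    simpa using this
  have hδ : Tendsto (fun j => a ⬝ᵥ ω' j) atTop (nhds c) := by
    have : (fun j => a ⬝ᵥ ω' j) = fun j => a ⬝ᵥ ωseq j - a ⬝ᵥ (ωseq j - ω' j) := by
      funext j
      simp [dotProduct_sub]
    rw [this]
    simpa using hconv.sub hpert
  have hcK : c ∈ (fun ω => a ⬝ᵥ ω) '' S :=
    hcompK.isClosed.mem_of_tendsto hδ
      (Filter.Eventually.of_forall fun j => ⟨ω' j, hω'S j, rfl⟩)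
  exact ⟨csInf_le hcompK.bddBelow hcK, le_csSup hcompK.bddAbove hcK⟩
end
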